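/- Every preferred extension is an accepted extension: for every preference default theory form : ι → L.Sentence and every preferred extension E of the theory, E ∈ Ext(lfp(C)). (Claim in the proof of Proposition 2.) -/
import Mathlib


open FirstOrder Language

namespace Brevis

/-- The base language with a single binary relation symbol `R`. -/
def baseLang : Language where
  Functions := fun _ => Empty
  Relations := fun n => match n with
    | 2 => Unit
    | _ => Empty

/-- The binary relation symbol `R` of `baseLang`. -/
def Rsym : baseLang.Relations 2 := Unit.unit

/-- The base language with a binary relation symbol `R` and one 0-ary relation symbol `P`. -/
def baseLangP : Language where
  Functions := fun _ => Empty
  Relations := fun n => match n with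
    | 0 => Unit
    | 2 => Unit
    | _ => Empty

/-- The binary relation symbol `R` of `baseLangP`. -/
def RsymP : baseLangP.Relations 2 := Unit.unit

/-- The 0-ary relation symbol `P` of `baseLangP`. -/
def Psym : baseLangP.Relations 0 := Unit.unit

/-- The atomic sentence `p` given by the propositional symbol `P`. -/
def pSent (ι : Type) : (baseLangP[[ι]]).Sentence :=
  Relations.formula (Sum.inl Psym) ![]

variable (L₀ : FirstOrder.Language.{0, 0}) (R : L₀.Relations 2) (ι : Type) [Fintype ι]

/-- The atomic sentence `d < d'`, i.e. `R (c_d) (c_d')`. -/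
def ltSent (d d' : ι) : (L₀[[ι]]).Sentence :=
  Relations.boundedFormula₂ (Sum.inl R) (L₀.con d).term (L₀.con d').term

/-- The theory `SPO` asserting that `R` is a strict partial order (irreflexive and transitive). -/
def spo : (L₀[[ι]]).Theory :=
  {Relations.irreflexive (Sum.inl R), Relations.transitive (Sum.inl R)}

/-- A set of sentences is consistent iff together with `SPO` it is satisfiable. -/
def Consistent (S : (L₀[[ι]]).Theory) : Prop :=
  Theory.IsSatisfiable (S ∪ spo L₀ R ι)

open scoped Classical in
/-- The extension base `B(e)` determined by the linear order `e` on the names. -/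
noncomputable def base (e : LinearOrder ι) (form : ι → (L₀[[ι]]).Sentence) :
    (L₀[[ι]]).Theory :=
  letI := e
  (Finset.univ.sort (· ≤ · : ι → ι → Prop)).foldl
    (fun B d => if Consistent L₀ R ι (B ∪ {form d}) then B ∪ {form d} else B) ∅

/-- The deductive closure (modulo `SPO`) of a set of sentences:
all sentences satisfied in every model of `S ∪ SPO`. -/
def closure (S : (L₀[[ι]]).Theory) : Set (L₀[[ι]]).Sentence :=
  {φ | (S ∪ spo L₀ R ι) ⊨ᵇ φ}

/-- The extension `E(e)` generated by the linear order `e`. -/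
noncomputable def extension (e : LinearOrder ι) (form : ι → (L₀[[ι]]).Sentence) :
    Set (L₀[[ι]]).Sentence :=
  closure L₀ R ι (base L₀ R ι e form)

/-- A strict partial order `p` on the names is compatible with `S` iff
`S ∪ SPO ∪ {d < d' | p d d'} ∪ {¬ (d < d') | ¬ p d d'}` is satisfiable. -/
def Compatible (p : ι → ι → Prop) (S : (L₀[[ι]]).Theory) : Prop :=
  Theory.IsSatisfiable
    (S ∪ spo L₀ R ι ∪ {φ | ∃ d d', p d d' ∧ φ = ltSent L₀ R ι d d'} ∪
      {φ | ∃ d d', ¬ p d d' ∧ φ = ∼(ltSent L₀ R ι d d')})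

/-- `Exts form S`: the set of extensions `E(e)` where `e` is a linear order extending some
strict partial order compatible with `S`. -/
def Exts (form : ι → (L₀[[ι]]).Sentence) (S : (L₀[[ι]]).Theory) :
    Set (Set (L₀[[ι]]).Sentence) :=
  {E | ∃ (e : LinearOrder ι) (p : ι → ι → Prop), IsStrictOrder ι p ∧
    Compatible L₀ R ι p S ∧ (∀ d d', p d d' → e.lt d d') ∧ E = extension L₀ R ι e form}

/-- The operator `C`. -/
def C (form : ι → (L₀[[ι]]).Sentence) (S : (L₀[[ι]]).Theory) : (L₀[[ι]]).Theory :=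
  ⋂₀ Exts L₀ R ι form S

/-- The least fixed point of `C` (Knaster–Tarski): the set of accepted conclusions. -/
def lfpC (form : ι → (L₀[[ι]]).Sentence) : (L₀[[ι]]).Theory :=
  sInf {S | C L₀ R ι form S ⊆ S}


/-- Every preferred extension is an accepted extension. -/
theorem preferred_is_accepted (ι : Type) [Fintype ι]
    (form : ι → (baseLang[[ι]]).Sentence) (E : (baseLang[[ι]]).Theory)
    (hE : E ∈ Exts baseLang Rsym ι form E) :
    E ∈ Exts baseLang Rsym ι form (lfpC baseLang Rsym ι form) := by
  have hCE : C baseLang Rsym ι form E ⊆ E := fun φ hφ => hφ E hE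
  have hsub : lfpC baseLang Rsym ι form ⊆ E := sInf_le hCE
  obtain ⟨e, p, hso, hcomp, hext, hEeq⟩ := hE
  refine ⟨e, p, hso, ?_, hext, hEeq⟩
  exact hcomp.mono (by
    apply Set.union_subset_union_left
    apply Set.union_subset_union_left
    exact Set.union_subset_union_left _ hsub)

end Brevis
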